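/- arXiv:1808.08175 — 3 statements merged into one kernel-verified Lean document; each statement's English description precedes it below -/
import Mathlib

section
/- Determinant factorization through an injection: if A : U → V and B : V → V are linear maps between finite-dimensional real inner product spaces with A injective, and J : range(A) → V is the inclusion, then det(Aᵀ B A) = det(Aᵀ A) · det(J* B J), where J* B J is the compression of B to range(A) (i.e., P ∘ B restricted to range(A), with P the orthogonal projection onto range(A)). -/
/-!
Factor `A = J ∘ e` with `J` the inclusion of `range A` and `e : U ≃ range A`. Since `Jᵀ = P`,
`Aᵀ B A = eᵀ (P B J) e` and `Aᵀ A = eᵀ e`; finally `det (g ∘ f ∘ e) = det (g ∘ e) * det f` for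
any linear equivalence `e`, by conjugating `f` with `e`.
-/

namespace LinearMap

theorem det_comp_comp_linearEquiv {R M N : Type*} [CommRing R] [AddCommGroup M] [Module R M]
    [AddCommGroup N] [Module R N] (g : N →ₗ[R] M) (f : N →ₗ[R] N) (e : M ≃ₗ[R] N) :
    LinearMap.det (g ∘ₗ f ∘ₗ e.toLinearMap)
      = LinearMap.det (g ∘ₗ e.toLinearMap) * LinearMap.det f := by
  have hconj : g ∘ₗ f ∘ₗ e.toLinearMap
      = (g ∘ₗ e.toLinearMap) ∘ₗ (e.symm.toLinearMap ∘ₗ f ∘ₗ e.symm.symm.toLinearMap) := by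
    ext; simp
  rw [hconj, det_comp, LinearMap.det_conj]

end LinearMap

namespace Submodule

variable {𝕜 E : Type*} [RCLike 𝕜] [NormedAddCommGroup E] [InnerProductSpace 𝕜 E]
  [FiniteDimensional 𝕜 E] (K : Submodule 𝕜 E)

theorem adjoint_subtype :
    LinearMap.adjoint K.subtype = K.orthogonalProjectionOnto.toLinearMap :=
  ((LinearMap.eq_adjoint_iff _ _).mpr fun x y ↦
    K.inner_orthogonalProjectionOnto_eq_of_mem_right y x).symm

theorem orthogonalProjectionOnto_comp_subtype :
    K.orthogonalProjectionOnto.toLinearMap ∘ₗ K.subtype = LinearMap.id := by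
  ext; simp

variable {F : Type*} [NormedAddCommGroup F] [InnerProductSpace 𝕜 F] [FiniteDimensional 𝕜 F]

theorem adjoint_subtype_comp_comp_subtype_comp (e : F →ₗ[𝕜] K) (B : E →ₗ[𝕜] E) :
    LinearMap.adjoint (K.subtype ∘ₗ e) ∘ₗ B ∘ₗ K.subtype ∘ₗ e
      = LinearMap.adjoint e ∘ₗ (K.orthogonalProjectionOnto.toLinearMap ∘ₗ B ∘ₗ K.subtype) ∘ₗ e := by
  simp only [LinearMap.adjoint_comp, adjoint_subtype, LinearMap.comp_assoc]

end Submodule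

open LinearMap in
/-- Determinant factorization through the inclusion of the range:
`det (Aᵀ B A) = det (Aᵀ A) * det (J* B J)` where `J* B J` is the compression of `B`
to `range A`, i.e. the orthogonal projection onto `range A` composed with `B`
restricted to `range A`. -/
theorem det_adjoint_comp_eq_det_mul_det_compression
    {U V : Type*}
    [NormedAddCommGroup U] [InnerProductSpace ℝ U] [FiniteDimensional ℝ U]
    [NormedAddCommGroup V] [InnerProductSpace ℝ V] [FiniteDimensional ℝ V]
    (A : U →ₗ[ℝ] V) (hA : Function.Injective A) (B : V →ₗ[ℝ] V) :
    LinearMap.det ((LinearMap.adjoint A) ∘ₗ B ∘ₗ A)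
      = LinearMap.det ((LinearMap.adjoint A) ∘ₗ A)
        * LinearMap.det
            (((Submodule.orthogonalProjectionOnto (LinearMap.range A)).toLinearMap
                ∘ₗ B ∘ₗ (LinearMap.range A).subtype :
              (LinearMap.range A) →ₗ[ℝ] (LinearMap.range A))) := by
  set W := range A
  set e := LinearEquiv.ofInjective A hA
  -- `A` is definitionally `W.subtype ∘ₗ e`.
  have hcompress : adjoint A ∘ₗ B ∘ₗ A = adjoint e.toLinearMap
      ∘ₗ (W.orthogonalProjectionOnto.toLinearMap ∘ₗ B ∘ₗ W.subtype) ∘ₗ e.toLinearMap :=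
    W.adjoint_subtype_comp_comp_subtype_comp e.toLinearMap B
  have hgram : adjoint A ∘ₗ A = adjoint e.toLinearMap ∘ₗ e.toLinearMap := by
    have h := W.adjoint_subtype_comp_comp_subtype_comp e.toLinearMap id
    simp only [id_comp, W.orthogonalProjectionOnto_comp_subtype] at h
    exact h
  rw [hcompress, hgram, det_comp_comp_linearEquiv]
end

section
/- Jacobian of a graph-type map: let f : ℝ × N → ℝ^d (N an open set in ℝ^{m−1}, or a chart domain) be differentiable at (s,z) with spatial differential df of rank m−1, and define F(s,z) := (s, f(s,z)) : ℝ × N → ℝ^{d+1}. Then the Gram determinant satisfies det(dFᵀ dF) = (1 + |n · f'|²) · det(dfᵀ df), where f' = ∂f/∂s and n · f' is the component of f' orthogonal to the range of df; equivalently J_F = √(1 + V²) · J_f with V the normal speed |f' − P f'| component, where P is the orthogonal projection onto range(df). -/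
/-!
Write `f' = n + df w` with `df w` the orthogonal projection of `f'` onto `range df`. Then
`dF = A ∘ S`, where `S (a, u) = (a, u + a • w)` is a transvection (determinant one) and
`A (a, u) = (a, a • n + df u)`. Since `n ⊥ range df`, the Gram operator `Aᵀ A` is block diagonal,
`diag (1 + ‖n‖², dfᵀ df)`, and `det (Sᵀ Aᵀ A S) = det (Aᵀ A) * (det S)²`.
-/

open LinearMap Module

variable {E F : Type*} [NormedAddCommGroup E] [InnerProductSpace ℝ E]
  [NormedAddCommGroup F] [InnerProductSpace ℝ F]

/-- The differential of the graph-type map `(s, z) ↦ (s, f (s, z))`, with `L` the spatial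
differential of `f` and `v = ∂f/∂s`. -/
def graphDifferential (L : E →ₗ[ℝ] F) (v : F) : WithLp 2 (ℝ × E) →ₗ[ℝ] WithLp 2 (ℝ × F) :=
  (WithLp.linearEquiv 2 ℝ (ℝ × F)).symm.toLinearMap
    ∘ₗ ((LinearMap.fst ℝ ℝ E).prod ((LinearMap.fst ℝ ℝ E).smulRight v + L ∘ₗ LinearMap.snd ℝ ℝ E))
    ∘ₗ (WithLp.linearEquiv 2 ℝ (ℝ × E)).toLinearMap

@[simp]
theorem graphDifferential_apply (L : E →ₗ[ℝ] F) (v : F) (x : WithLp 2 (ℝ × E)) :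
    graphDifferential L v x = WithLp.toLp 2 (x.fst, x.fst • v + L x.snd) := rfl

def prodShear (w : E) : Module.End ℝ (WithLp 2 (ℝ × E)) :=
  transvection (LinearMap.fst ℝ ℝ E ∘ₗ (WithLp.linearEquiv 2 ℝ (ℝ × E)).toLinearMap)
    (WithLp.toLp 2 (0, w))

theorem graphDifferential_add_map_eq_comp_prodShear (L : E →ₗ[ℝ] F) (v : F) (w : E) :
    graphDifferential L (v + L w) = graphDifferential L v ∘ₗ prodShear w := by
  ext x
  simp [prodShear, transvection.apply]
  abel

variable [FiniteDimensional ℝ E] [FiniteDimensional ℝ F]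

theorem det_prodShear (w : E) : (prodShear w).det = 1 := by
  simp [prodShear]

theorem LinearMap.det_adjoint_comp_self_comp (B : E →ₗ[ℝ] F) (S : E →ₗ[ℝ] E) :
    (adjoint (B ∘ₗ S) ∘ₗ (B ∘ₗ S)).det = (adjoint B ∘ₗ B).det * S.det ^ 2 := by
  rw [← (B ∘ₗ S).normDet_sq, ← B.normDet_sq, normDet_comp_of_finrank_eq S B rfl,
    normDet_eq_abs_det]
  simp [mul_pow]

theorem adjoint_graphDifferential_comp_self {L : E →ₗ[ℝ] F} {v : F} (hv : v ∈ (range L)ᗮ) :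
    adjoint (graphDifferential L v) ∘ₗ graphDifferential L v =
      (WithLp.linearEquiv 2 ℝ (ℝ × E)).symm.conj
        (((1 + ‖v‖ ^ 2) • LinearMap.id).prodMap (adjoint L ∘ₗ L)) := by
  ext1 x
  refine ext_inner_left ℝ fun y => ?_
  have hvL : ∀ u, inner ℝ v (L u) = 0 := fun u =>
    (Submodule.mem_orthogonal' _ _).mp hv _ (mem_range_self L u)
  simp [adjoint_inner_right, WithLp.prod_inner_apply, inner_add_left, inner_add_right,
    real_inner_smul_left, real_inner_smul_right, hvL, real_inner_comm v, LinearEquiv.conj_apply]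
  ring

theorem det_adjoint_graphDifferential_comp_self_of_mem_orthogonal {L : E →ₗ[ℝ] F} {v : F}
    (hv : v ∈ (range L)ᗮ) :
    (adjoint (graphDifferential L v) ∘ₗ graphDifferential L v).det =
      (1 + ‖v‖ ^ 2) * (adjoint L ∘ₗ L).det := by
  rw [adjoint_graphDifferential_comp_self hv, LinearEquiv.conj_apply, comp_assoc, det_conj,
    det_prodMap, det_smul, det_id, finrank_self, pow_one, mul_one]

theorem det_adjoint_graphDifferential_comp_self (L : E →ₗ[ℝ] F) (v : F) :
    (adjoint (graphDifferential L v) ∘ₗ graphDifferential L v).det =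
      (1 + ‖v - (range L).starProjection v‖ ^ 2) * (adjoint L ∘ₗ L).det := by
  obtain ⟨w, hw⟩ := mem_range.mp ((range L).starProjection_apply_mem v)
  have hdecomp : graphDifferential L v =
      graphDifferential L (v - (range L).starProjection v) ∘ₗ prodShear w := by
    rw [← graphDifferential_add_map_eq_comp_prodShear, hw, sub_add_cancel]
  rw [hdecomp, det_adjoint_comp_self_comp, det_prodShear, one_pow, mul_one,
    det_adjoint_graphDifferential_comp_self_of_mem_orthogonal
      (Submodule.sub_starProjection_mem_orthogonal v)]

theorem gram_det_graph_map_general {k d : ℕ}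
    (df : EuclideanSpace ℝ (Fin k) →ₗ[ℝ] EuclideanSpace ℝ (Fin d))
    (f' : EuclideanSpace ℝ (Fin d)) :
    let E₁ := EuclideanSpace ℝ (Fin k)
    let E₂ := EuclideanSpace ℝ (Fin d)
    let dF : WithLp 2 (ℝ × E₁) →ₗ[ℝ] WithLp 2 (ℝ × E₂) :=
      (WithLp.linearEquiv 2 ℝ (ℝ × E₂)).symm.toLinearMap
        ∘ₗ ((LinearMap.fst ℝ ℝ E₁).prod
              ((LinearMap.fst ℝ ℝ E₁).smulRight f' + df.comp (LinearMap.snd ℝ ℝ E₁)))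
        ∘ₗ (WithLp.linearEquiv 2 ℝ (ℝ × E₁)).toLinearMap
    let V : ℝ := ‖f' - (Submodule.orthogonalProjection (LinearMap.range df) f' : E₂)‖
    LinearMap.det ((LinearMap.adjoint dF) ∘ₗ dF)
      = (1 + V ^ 2) * LinearMap.det ((LinearMap.adjoint df) ∘ₗ df) :=
  det_adjoint_graphDifferential_comp_self df f'

/-- Jacobian of the graph-type map `F(s,z) = (s, f(s,z))`: at the level of differentials,
with `df` the injective spatial differential, `f'` the time derivative, and
`dF (a, u) = (a, a • f' + df u)`, the Gram determinants satisfy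
`det (dFᵀ dF) = (1 + V²) * det (dfᵀ df)` where `V = ‖f' - P f'‖` and `P` is the orthogonal
projection onto `range df`. -/
theorem gram_det_graph_map {k d : ℕ}
    (df : EuclideanSpace ℝ (Fin k) →ₗ[ℝ] EuclideanSpace ℝ (Fin d))
    (hdf : Function.Injective df) (f' : EuclideanSpace ℝ (Fin d)) :
    let E₁ := EuclideanSpace ℝ (Fin k)
    let E₂ := EuclideanSpace ℝ (Fin d)
    let dF : WithLp 2 (ℝ × E₁) →ₗ[ℝ] WithLp 2 (ℝ × E₂) :=
      (WithLp.linearEquiv 2 ℝ (ℝ × E₂)).symm.toLinearMap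
        ∘ₗ ((LinearMap.fst ℝ ℝ E₁).prod
              ((LinearMap.fst ℝ ℝ E₁).smulRight f' + df.comp (LinearMap.snd ℝ ℝ E₁)))
        ∘ₗ (WithLp.linearEquiv 2 ℝ (ℝ × E₁)).toLinearMap
    let V : ℝ := ‖f' - (Submodule.orthogonalProjection (LinearMap.range df) f' : E₂)‖
    LinearMap.det ((LinearMap.adjoint dF) ∘ₗ dF)
      = (1 + V ^ 2) * LinearMap.det ((LinearMap.adjoint df) ∘ₗ df) :=
  gram_det_graph_map_general df f'
end

section
/- Combining the block determinant formula with the compression identity: for an injective linear map df : ℝ^{m−1} → ℝ^d and a vector f' ∈ ℝ^d, det( dfᵀ df − (dfᵀ f') ⊗ (dfᵀ f') / (|f'|² + 1) ) = det(dfᵀ df) · (1 − |P f'|² / (|f'|² + 1)), where P is the orthogonal projection onto range(df). -/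
/-! The Gram operator `G = dfᵀ df` is invertible because `df` is injective; let `x` solve
the normal equations `G x = dfᵀ f'`. Then `G - c (dfᵀ f') ⊗ (dfᵀ f') = G ∘ (1 - c x ⊗ dfᵀ f')`,
whose determinant is `det G · (1 - c ⟪dfᵀ f', x⟫)` by the matrix determinant lemma. The normal
equations also say that `df x` is the orthogonal projection of `f'` onto `range df`, and
`⟪dfᵀ f', x⟫ = ⟪G x, x⟫ = ‖df x‖²`. -/

namespace LinearMap

theorem det_id_add_toSpanSingleton_comp {R M : Type*} [CommRing R] [AddCommGroup M] [Module R M]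
    [Module.Free R M] [Module.Finite R M] (x : M) (f : M →ₗ[R] R) :
    LinearMap.det (LinearMap.id + toSpanSingleton R M x ∘ₗ f) = 1 + f x := by
  classical
  let b := Module.Free.chooseBasis R M
  have hmat : toMatrix b b (LinearMap.id + toSpanSingleton R M x ∘ₗ f)
      = 1 + Matrix.replicateCol Unit (b.repr x) * Matrix.replicateRow Unit (fun i => f (b i)) := by
    ext i j
    simp [toMatrix_apply, Matrix.one_apply, Matrix.mul_apply, Finsupp.single_apply, eq_comm,
      mul_comm]
  rw [← det_toMatrix b, hmat, Matrix.det_one_add_replicateCol_mul_replicateRow]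
  conv_rhs => rw [← b.sum_repr x, map_sum]
  simp [dotProduct, mul_comm]

variable {𝕜 E F : Type*} [RCLike 𝕜]
  [NormedAddCommGroup E] [InnerProductSpace 𝕜 E] [FiniteDimensional 𝕜 E]
  [NormedAddCommGroup F] [InnerProductSpace 𝕜 F] [FiniteDimensional 𝕜 F]

theorem surjective_adjoint_comp_self {A : E →ₗ[𝕜] F} (hA : Function.Injective A) :
    Function.Surjective (A.adjoint ∘ₗ A) :=
  injective_iff_surjective.mp ((adjoint_comp_self_injective_iff A).mpr hA)

theorem starProjection_range_of_adjoint_apply_eq {A : E →ₗ[𝕜] F} {x : E} {y : F}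
    (h : A.adjoint (A x) = A.adjoint y) : A.range.starProjection y = A x :=
  Submodule.eq_starProjection_of_mem_orthogonal (mem_range_self A x) <| by
    rw [orthogonal_range, mem_ker, map_sub, h, sub_self]

end LinearMap

/-- Determinant of the Gram matrix minus a rank-one term:
`det( dfᵀ df − (dfᵀ f') ⊗ (dfᵀ f') / (|f'|² + 1) ) = det(dfᵀ df) · (1 − |P f'|²/(|f'|²+1))`,
where `P` is the orthogonal projection onto `range df`. -/
theorem det_gram_sub_rankOne {k d : ℕ}
    (df : EuclideanSpace ℝ (Fin k) →ₗ[ℝ] EuclideanSpace ℝ (Fin d))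
    (hdf : Function.Injective df) (f' : EuclideanSpace ℝ (Fin d)) :
    let w : EuclideanSpace ℝ (Fin k) := LinearMap.adjoint df f'
    LinearMap.det
        ((LinearMap.adjoint df) ∘ₗ df
          - (‖f'‖ ^ 2 + 1)⁻¹ •
              ((LinearMap.toSpanSingleton ℝ _ w).comp (innerSL ℝ w).toLinearMap))
      = LinearMap.det ((LinearMap.adjoint df) ∘ₗ df)
          * (1 - ‖(Submodule.orthogonalProjection (LinearMap.range df) f' : EuclideanSpace ℝ (Fin d))‖ ^ 2
                  / (‖f'‖ ^ 2 + 1)) := by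
  intro w
  obtain ⟨x, hx⟩ := LinearMap.surjective_adjoint_comp_self hdf w
  have hfactor : df.adjoint ∘ₗ df - (‖f'‖ ^ 2 + 1)⁻¹ •
        (LinearMap.toSpanSingleton ℝ _ w ∘ₗ (innerSL ℝ w).toLinearMap)
      = (df.adjoint ∘ₗ df) ∘ₗ (LinearMap.id + LinearMap.toSpanSingleton ℝ _ x ∘ₗ
          (-(‖f'‖ ^ 2 + 1)⁻¹ • (innerSL ℝ w).toLinearMap)) := by
    rw [LinearMap.comp_add, LinearMap.comp_id, ← LinearMap.comp_assoc,
      LinearMap.comp_toSpanSingleton, hx, LinearMap.comp_smul, neg_smul, ← sub_eq_add_neg]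
  have hP : (Submodule.orthogonalProjectionOnto (LinearMap.range df) f' :
      EuclideanSpace ℝ (Fin d)) = df x :=
    LinearMap.starProjection_range_of_adjoint_apply_eq hx
  have hnorm : ‖df x‖ ^ 2 = inner ℝ w x := by
    rw [← real_inner_self_eq_norm_sq, ← LinearMap.adjoint_inner_left, ← hx,
      LinearMap.comp_apply]
  rw [hfactor, LinearMap.det_comp, LinearMap.det_id_add_toSpanSingleton_comp,
    hP, hnorm, LinearMap.smul_apply, ContinuousLinearMap.coe_coe, innerSL_apply_apply, smul_eq_mul]
  ring
end
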